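/- For a poset-causal system with dual system over the dual poset, the structured controllability and observability subspaces satisfy: (R̄)^d = Ñ^⊥, (R°)^d = (N°)^⊥, (R̃)^d = N̄^⊥, (N̄)^d = R̃^⊥, (N°)^d = (R°)^⊥ and (Ñ)^d = R̄^⊥, where the superscript d denotes the corresponding subspace computed for the dual system (Aᵀ, Cᵀ, Bᵀ, Dᵀ). -/

import Mathlib

open Matrix

attribute [local instance] Classical.propDecidable

/-- Block index type for a partition `n` over the index set `P`. -/
abbrev BIdx {P : Type*} (n : P → ℕ) : Type _ := (i : P) × Fin (n i)

variable {P : Type*} [Fintype P] [DecidableEq P]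

/-- The embedding matrix `I_n(:,S)` of `ℝ^{n_S}` into `ℝ^{n}`. -/
noncomputable def embMat (n : P → ℕ) (S : Set P) :
    Matrix (BIdx n) {a : BIdx n // a.1 ∈ S} ℝ :=
  Matrix.of fun p q => if p = (q : BIdx n) then 1 else 0

/-- The matrix of the orthogonal projection onto the coordinate subspace of block indices in `S`. -/
noncomputable def projMat (n : P → ℕ) (S : Set P) : Matrix (BIdx n) (BIdx n) ℝ :=
  Matrix.of fun p q => if p = q ∧ p.1 ∈ S then 1 else 0

/-- Downstream set `↓S = {i | ∃ j ∈ S, j ⪰ i}` (where `j ⪰ i` is encoded as `le i j`). -/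
def downSet (le : P → P → Prop) (S : Set P) : Set P := {i | ∃ j ∈ S, le i j}

/-- Upstream set `↑S = {i | ∃ j ∈ S, i ⪰ j}`. -/
def upSet (le : P → P → Prop) (S : Set P) : Set P := {i | ∃ j ∈ S, le j i}

/-- Membership of a block matrix in the block incidence space: `G_{ab} = 0` whenever `b ⋡ a`. -/
def Inc (le : P → P → Prop) {n m : P → ℕ} (G : Matrix (BIdx n) (BIdx m) ℝ) : Prop :=
  ∀ a b, ¬ le a.1 b.1 → G a b = 0

/-- Block compression `G(Q,S)` of a block matrix to block rows in `Q` and block columns in `S`. -/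
def bcmp {n m : P → ℕ} (G : Matrix (BIdx n) (BIdx m) ℝ) (Q S : Set P) :
    Matrix {a : BIdx n // a.1 ∈ Q} {a : BIdx m // a.1 ∈ S} ℝ :=
  G.submatrix Subtype.val Subtype.val

/-- The reachable subspace `R(A,B) = im [B, AB, ..., A^{n-1}B]`. -/
noncomputable def reach {ι κ : Type*} [Fintype ι] [Fintype κ] [DecidableEq ι]
    (A : Matrix ι ι ℝ) (B : Matrix ι κ ℝ) : Submodule ℝ (ι → ℝ) :=
  ⨆ k : Fin (Fintype.card ι), LinearMap.range ((A ^ (k : ℕ) * B).mulVecLin)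

/-- The unobservable subspace `N(C,A) = ker [C; CA; ...; CA^{n-1}]`. -/
noncomputable def unobs {ι κ : Type*} [Fintype ι] [Fintype κ] [DecidableEq ι]
    (C : Matrix κ ι ℝ) (A : Matrix ι ι ℝ) : Submodule ℝ (ι → ℝ) :=
  ⨅ k : Fin (Fintype.card ι), LinearMap.ker ((C * A ^ (k : ℕ)).mulVecLin)

/-- The reachable subspace, inside Euclidean space. -/
noncomputable def reachE {ι κ : Type*} [Fintype ι] [Fintype κ] [DecidableEq ι] [DecidableEq κ]
    (A : Matrix ι ι ℝ) (B : Matrix ι κ ℝ) : Submodule ℝ (EuclideanSpace ℝ ι) :=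
  ⨆ k : Fin (Fintype.card ι), LinearMap.range (Matrix.toEuclideanLin (A ^ (k : ℕ) * B))

/-- The unobservable subspace, inside Euclidean space. -/
noncomputable def unobsE {ι κ : Type*} [Fintype ι] [Fintype κ] [DecidableEq ι] [DecidableEq κ]
    (C : Matrix κ ι ℝ) (A : Matrix ι ι ℝ) : Submodule ℝ (EuclideanSpace ℝ ι) :=
  ⨅ k : Fin (Fintype.card ι), LinearMap.ker (Matrix.toEuclideanLin (C * A ^ (k : ℕ)))

/-- The coordinate subspace `X_S = ⊕_{j ∈ S} X_j` of the global state space. -/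
noncomputable def coordSub (n : P → ℕ) (S : Set P) : Submodule ℝ (BIdx n → ℝ) :=
  LinearMap.range (projMat n S).mulVecLin

/-- The coordinate subspace `X_S`, inside Euclidean space. -/
noncomputable def coordE (n : P → ℕ) (S : Set P) : Submodule ℝ (EuclideanSpace ℝ (BIdx n)) :=
  LinearMap.range (Matrix.toEuclideanLin (projMat n S))

/-- The `i`-downstream reachable set `R_i = R(A(↓i,↓i), B(↓i,i))`, embedded into the
global state space via `I_n(:,↓i)`. -/
noncomputable def Ri (le : P → P → Prop) {n m : P → ℕ}
    (A : Matrix (BIdx n) (BIdx n) ℝ) (B : Matrix (BIdx n) (BIdx m) ℝ) (i : P) :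
    Submodule ℝ (BIdx n → ℝ) :=
  Submodule.map (embMat n (downSet le {i})).mulVecLin
    (reach (bcmp A (downSet le {i}) (downSet le {i})) (bcmp B (downSet le {i}) {i}))

/-- The `i`-downstream reachable set, inside Euclidean space. -/
noncomputable def RiE (le : P → P → Prop) {n m : P → ℕ}
    (A : Matrix (BIdx n) (BIdx n) ℝ) (B : Matrix (BIdx n) (BIdx m) ℝ) (i : P) :
    Submodule ℝ (EuclideanSpace ℝ (BIdx n)) :=
  Submodule.map (Matrix.toEuclideanLin (embMat n (downSet le {i})))
    (reachE (bcmp A (downSet le {i}) (downSet le {i})) (bcmp B (downSet le {i}) {i}))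

/-- The `i`-upstream indistinguishable set `N_i = N(C(i,↑i), A(↑i,↑i))`, embedded into the
global state space via `I_n(:,↑i)`. -/
noncomputable def Ni (le : P → P → Prop) {n r : P → ℕ}
    (C : Matrix (BIdx r) (BIdx n) ℝ) (A : Matrix (BIdx n) (BIdx n) ℝ) (i : P) :
    Submodule ℝ (BIdx n → ℝ) :=
  Submodule.map (embMat n (upSet le {i})).mulVecLin
    (unobs (bcmp C {i} (upSet le {i})) (bcmp A (upSet le {i}) (upSet le {i})))

/-- The `i`-upstream indistinguishable set, inside Euclidean space. -/
noncomputable def NiE (le : P → P → Prop) {n r : P → ℕ}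
    (C : Matrix (BIdx r) (BIdx n) ℝ) (A : Matrix (BIdx n) (BIdx n) ℝ) (i : P) :
    Submodule ℝ (EuclideanSpace ℝ (BIdx n)) :=
  Submodule.map (Matrix.toEuclideanLin (embMat n (upSet le {i})))
    (unobsE (bcmp C {i} (upSet le {i})) (bcmp A (upSet le {i}) (upSet le {i})))

/-- The independently reachable subspace `R̄ = ⊕_j Σ_{i∈↑j} (X_j ∩ R_i)`. -/
noncomputable def Rbar (le : P → P → Prop) {n m : P → ℕ}
    (A : Matrix (BIdx n) (BIdx n) ℝ) (B : Matrix (BIdx n) (BIdx m) ℝ) :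
    Submodule ℝ (EuclideanSpace ℝ (BIdx n)) :=
  ⨆ j : P, ⨆ i : P, ⨆ _ : le j i, (coordE n {j} ⊓ RiE le A B i)

/-- The weakly upstream reachable subspace `R̃ = ⊕_j P_{X_j} R`. -/
noncomputable def Rtil {n m : P → ℕ}
    (A : Matrix (BIdx n) (BIdx n) ℝ) (B : Matrix (BIdx n) (BIdx m) ℝ) :
    Submodule ℝ (EuclideanSpace ℝ (BIdx n)) :=
  ⨆ j : P, Submodule.map (Matrix.toEuclideanLin (projMat n {j})) (reachE A B)

/-- The subspace `R° = ⊕_j (X_j ∩ R)`. -/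
noncomputable def Rcirc {n m : P → ℕ}
    (A : Matrix (BIdx n) (BIdx n) ℝ) (B : Matrix (BIdx n) (BIdx m) ℝ) :
    Submodule ℝ (EuclideanSpace ℝ (BIdx n)) :=
  ⨆ j : P, (coordE n {j} ⊓ reachE A B)

/-- The subspace `N̄ = ⊕_j ∩_{i∈↓j} (N_i ∩ X_j)`. -/
noncomputable def Nbar (le : P → P → Prop) {n r : P → ℕ}
    (C : Matrix (BIdx r) (BIdx n) ℝ) (A : Matrix (BIdx n) (BIdx n) ℝ) :
    Submodule ℝ (EuclideanSpace ℝ (BIdx n)) :=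
  ⨆ j : P, ⨅ i : P, ⨅ _ : le i j, (NiE le C A i ⊓ coordE n {j})

/-- The subspace `Ñ = ⊕_j ∩_{i∈↓j} P_{X_j} N_i`. -/
noncomputable def Ntil (le : P → P → Prop) {n r : P → ℕ}
    (C : Matrix (BIdx r) (BIdx n) ℝ) (A : Matrix (BIdx n) (BIdx n) ℝ) :
    Submodule ℝ (EuclideanSpace ℝ (BIdx n)) :=
  ⨆ j : P, ⨅ i : P, ⨅ _ : le i j,
    Submodule.map (Matrix.toEuclideanLin (projMat n {j})) (NiE le C A i)

/-- The subspace `N° = ⊕_j P_{X_j} N`. -/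
noncomputable def Ncirc {n r : P → ℕ}
    (C : Matrix (BIdx r) (BIdx n) ℝ) (A : Matrix (BIdx n) (BIdx n) ℝ) :
    Submodule ℝ (EuclideanSpace ℝ (BIdx n)) :=
  ⨆ j : P, Submodule.map (Matrix.toEuclideanLin (projMat n {j})) (unobsE C A)

/-!
Transposition turns unobservable subspaces into orthogonal complements of reachable ones,
`N(Bᵀ, Aᵀ) = R(A, B)ᗮ`. Over the reversed order the local subsystem of the dual at `i` lives on
the same blocks `↓i` as the local subsystem `R_i` of the original one, so `N_iᵈ = X_{↓i} ∩ R_iᗮ`,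
and block causality gives `R = Σ_i R_i`. The coordinate projections `P_j` are the orthogonal
projections onto the mutually orthogonal blocks `X_j`, and they sum to the identity; hence
`(⊕_j W_j)ᗮ = ⊕_j (X_j ∩ W_jᗮ)` for `W_j ≤ X_j`, and `P_j (Vᗮ)` is the orthogonal complement of
`X_j ∩ V` inside `X_j`. With these two rules each identity reduces blockwise to a statement about
`R` and the `R_i`. The first three identities are the last three for the dual system, whose dual
is the original one.
-/

namespace Submodule

variable {E : Type*} [NormedAddCommGroup E] [InnerProductSpace ℝ E]

lemma inf_orthogonal_map_starProjection (U V : Submodule ℝ E) [U.HasOrthogonalProjection] :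
    U ⊓ (V.map (U.starProjection : E →ₗ[ℝ] E))ᗮ = U ⊓ Vᗮ := by
  ext x
  simp only [mem_inf, mem_orthogonal, mem_map, forall_exists_index, and_imp,
    forall_apply_eq_imp_iff₂, and_congr_right_iff]
  intro hx
  simp_rw [ContinuousLinearMap.coe_coe, inner_starProjection_left_eq_right,
    starProjection_eq_self_iff.mpr hx]

lemma orthogonal_iSup {ι : Sort*} (K : ι → Submodule ℝ E) : (⨆ i, K i)ᗮ = ⨅ i, (K i)ᗮ :=
  (orthogonal_gc ℝ E).l_iSup

lemma map_starProjection_orthogonal_inf_of_le {U U' W : Submodule ℝ E}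
    [U.HasOrthogonalProjection] [U'.HasOrthogonalProjection] (hU : U ≤ U') (hW : W ≤ U') :
    (Wᗮ ⊓ U').map (U.starProjection : E →ₗ[ℝ] E) = Wᗮ.map (U.starProjection : E →ₗ[ℝ] E) := by
  refine le_antisymm (map_mono inf_le_left) ?_
  rintro _ ⟨v, hv, rfl⟩
  refine ⟨U'.starProjection v, ⟨fun w hw => ?_, U'.starProjection_apply_mem v⟩,
    congr($(starProjection_comp_starProjection_of_le hU) v)⟩
  rw [← inner_starProjection_left_eq_right, starProjection_eq_self_iff.mpr (hW hw)]
  exact hv w hw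

variable [FiniteDimensional ℝ E]

lemma inf_orthogonal_inf_orthogonal_of_le {U W : Submodule ℝ E} (h : W ≤ U) :
    U ⊓ (U ⊓ Wᗮ)ᗮ = W := by
  have : (U ⊓ Wᗮ)ᗮ = Uᗮ ⊔ W := by
    rw [← U.orthogonal_orthogonal, inf_orthogonal, orthogonal_orthogonal, orthogonal_orthogonal]
  rw [this, ← inf_sup_assoc_of_le _ h, inf_orthogonal_eq_bot, bot_sup_eq]

lemma map_starProjection_orthogonal (U V : Submodule ℝ E) :
    Vᗮ.map (U.starProjection : E →ₗ[ℝ] E) = U ⊓ (U ⊓ V)ᗮ := by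
  have hle : Vᗮ.map (U.starProjection : E →ₗ[ℝ] E) ≤ U := by
    rintro _ ⟨v, -, rfl⟩
    exact U.starProjection_apply_mem v
  rw [← inf_orthogonal_inf_orthogonal_of_le hle, inf_orthogonal_map_starProjection,
    orthogonal_orthogonal]

lemma orthogonal_iSup_of_le {ι : Type*} [Fintype ι] {U W : ι → Submodule ℝ E}
    (hU : Pairwise fun i j => U i ⟂ U j) (hsum : ∀ x, ∑ i, (U i).starProjection x = x)
    (hW : ∀ i, W i ≤ U i) :
    (⨆ i, W i)ᗮ = ⨆ i, U i ⊓ (W i)ᗮ := by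
  rw [orthogonal_iSup]
  apply le_antisymm
  · intro x hx
    rw [← hsum x]
    refine sum_mem fun i _ => mem_iSup_of_mem i ⟨(U i).starProjection_apply_mem x, ?_⟩
    intro w hw
    rw [← inner_starProjection_left_eq_right, starProjection_eq_self_iff.mpr (hW i hw)]
    exact (mem_iInf _).mp hx i w hw
  · refine iSup_le fun i => le_iInf fun j => ?_
    obtain rfl | hij := eq_or_ne i j
    · exact inf_le_right
    · exact inf_le_left.trans ((hU hij).le.trans (orthogonal_le (hW j)))

end Submodule

namespace Matrix

variable {ι κ : Type*} [Fintype ι] [Fintype κ] [DecidableEq ι] [DecidableEq κ]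

lemma toEuclideanLin_transpose (M : Matrix ι κ ℝ) :
    toEuclideanLin Mᵀ = (toEuclideanLin M).adjoint := by
  rw [← conjTranspose_eq_transpose_of_trivial, toEuclideanLin_conjTranspose_eq_adjoint]

lemma orthogonal_range_toEuclideanLin (M : Matrix ι κ ℝ) :
    (LinearMap.range (toEuclideanLin M))ᗮ = LinearMap.ker (toEuclideanLin Mᵀ) := by
  rw [toEuclideanLin_transpose, LinearMap.orthogonal_range]

lemma map_toEuclideanLin_orthogonal {M : Matrix ι κ ℝ} (hM : Mᵀ * M = 1)
    (W : Submodule ℝ (EuclideanSpace ℝ κ)) :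
    Wᗮ.map (toEuclideanLin M) =
      (W.map (toEuclideanLin M))ᗮ ⊓ LinearMap.range (toEuclideanLin M) := by
  have hinner : ∀ x y, inner ℝ (toEuclideanLin M x) (toEuclideanLin M y) = inner ℝ x y := by
    intro x y
    rw [← LinearMap.adjoint_inner_right, ← toEuclideanLin_transpose, ← LinearMap.comp_apply,
      ← toLpLin_mul_same, hM, toLpLin_one]
    rfl
  exact W.map_orthogonal ((toEuclideanLin M).isometryOfInner hinner)

end Matrix

section Reachability

variable {ι κ : Type*} [Fintype ι] [Fintype κ] [DecidableEq ι] [DecidableEq κ]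

lemma unobsE_transpose_eq_orthogonal (A : Matrix ι ι ℝ) (B : Matrix ι κ ℝ) :
    unobsE Bᵀ Aᵀ = (reachE A B)ᗮ := by
  rw [unobsE, reachE, Submodule.orthogonal_iSup]
  refine iInf_congr fun k => ?_
  rw [Matrix.orthogonal_range_toEuclideanLin, transpose_mul, transpose_pow]

-- Cayley–Hamilton: `A ^ k` is a polynomial in `A` of degree `< card ι`, so the truncation in
-- `reachE` loses nothing.
lemma range_pow_mul_le_reachE (A : Matrix ι ι ℝ) (B : Matrix ι κ ℝ) (k : ℕ) :
    LinearMap.range (toEuclideanLin (A ^ k * B)) ≤ reachE A B := by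
  cases isEmpty_or_nonempty ι
  · exact fun x _ => by rw [Subsingleton.elim x 0]; exact zero_mem _
  have hdeg : (Polynomial.X ^ k %ₘ A.charpoly).natDegree < Fintype.card ι := by
    rw [← A.charpoly_natDegree_eq_dim]
    refine Polynomial.natDegree_modByMonic_lt _ A.charpoly_monic fun h =>
      Fintype.card_ne_zero (α := ι) ?_
    simpa [h] using A.charpoly_natDegree_eq_dim.symm
  rintro _ ⟨x, rfl⟩
  rw [A.pow_eq_aeval_mod_charpoly, Polynomial.aeval_eq_sum_range' hdeg, Matrix.sum_mul,
    map_sum, LinearMap.sum_apply]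
  refine Submodule.sum_mem _ fun l hl => Submodule.mem_iSup_of_mem ⟨l, Finset.mem_range.mp hl⟩ ?_
  rw [Matrix.smul_mul, map_smul, LinearMap.smul_apply]
  exact Submodule.smul_mem _ _ (LinearMap.mem_range_self _ x)

lemma reachE_eq_iSup (A : Matrix ι ι ℝ) (B : Matrix ι κ ℝ) :
    reachE A B = ⨆ k : ℕ, LinearMap.range (toEuclideanLin (A ^ k * B)) :=
  le_antisymm (iSup_le fun k => le_iSup_of_le (k : ℕ) le_rfl)
    (iSup_le (range_pow_mul_le_reachE A B))

end Reachability

section CoordinateSubspaces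

variable {n : P → ℕ}

lemma projMat_eq_diagonal {P : Type*} [DecidableEq P] {n : P → ℕ} (S : Set P) :
    projMat n S = diagonal fun a => if a.1 ∈ S then 1 else 0 := by
  ext a b
  by_cases h : a = b <;> simp [projMat, h]

lemma projMat_transpose {P : Type*} [DecidableEq P] {n : P → ℕ} (S : Set P) :
    (projMat n S)ᵀ = projMat n S := by
  rw [projMat_eq_diagonal, diagonal_transpose]

lemma projMat_mul_projMat (S T : Set P) : projMat n S * projMat n T = projMat n (S ∩ T) := by
  simp only [projMat_eq_diagonal, diagonal_mul_diagonal, Set.mem_inter_iff, ite_zero_mul_ite_zero,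
    mul_one]

lemma projMat_empty {P : Type*} [DecidableEq P] {n : P → ℕ} : projMat n ∅ = 0 := by
  ext a b
  simp [projMat]

lemma sum_projMat_singleton : ∑ j, projMat n {j} = 1 := by
  ext a b
  by_cases h : a = b <;> simp [Matrix.sum_apply, projMat, Matrix.one_apply, h]

lemma toEuclideanLin_projMat (S : Set P) :
    toEuclideanLin (projMat n S) = ((coordE n S).starProjection : _ →ₗ[ℝ] _) := by
  have hproj : (toEuclideanLin (projMat n S)).IsSymmetricProjection := by
    refine ⟨?_, ?_⟩
    · rw [IsIdempotentElem, Module.End.mul_eq_comp, ← toLpLin_mul_same, projMat_mul_projMat,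
        Set.inter_self]
    · rw [isSymmetric_toEuclideanLin_iff, IsHermitian, conjTranspose_eq_transpose_of_trivial,
        projMat_transpose]
  obtain ⟨_, h⟩ := LinearMap.isSymmetricProjection_iff_eq_coe_starProjection_range.mp hproj
  exact h

lemma toEuclideanLin_projMat_apply (S : Set P) (x : EuclideanSpace ℝ (BIdx n)) :
    toEuclideanLin (projMat n S) x = (coordE n S).starProjection x := by
  rw [toEuclideanLin_projMat]
  rfl

lemma coordE_isOrtho {S T : Set P} (h : Disjoint S T) : coordE n S ⟂ coordE n T := by
  rintro _ ⟨x, rfl⟩ _ ⟨y, rfl⟩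
  rw [← LinearMap.adjoint_inner_right, ← toEuclideanLin_transpose, ← LinearMap.comp_apply,
    ← toLpLin_mul_same, projMat_transpose, projMat_mul_projMat, h.symm.inter_eq, projMat_empty,
    map_zero, LinearMap.zero_apply, inner_zero_right]

lemma sum_starProjection_coordE (x : EuclideanSpace ℝ (BIdx n)) :
    ∑ j, (coordE n {j}).starProjection x = x := by
  simp_rw [← toEuclideanLin_projMat_apply, ← LinearMap.sum_apply, ← map_sum,
    sum_projMat_singleton, toLpLin_one, LinearMap.id_apply]

lemma coordE_mono {S T : Set P} (h : S ⊆ T) : coordE n S ≤ coordE n T := by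
  rw [coordE, ← Set.inter_eq_right.mpr h, ← projMat_mul_projMat, toLpLin_mul_same]
  exact LinearMap.range_comp_le_range _ _

end CoordinateSubspaces

section Embedding

variable {n : P → ℕ}

lemma mul_embMat_apply {ι : Type*} (M : Matrix ι (BIdx n) ℝ) (S : Set P) (x : ι)
    (q : {a : BIdx n // a.1 ∈ S}) : (M * embMat n S) x q = M x q := by
  simp [embMat, mul_apply]

lemma embMat_transpose_mul_embMat (S : Set P) : (embMat n S)ᵀ * embMat n S = 1 := by
  ext q q'
  rw [mul_embMat_apply]
  simp [embMat, one_apply, Subtype.ext_iff, eq_comm]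

-- The `Fintype` instance of the block subtype is an argument so that these two lemmas apply at
-- `S = {i}`, where instance search decides membership by `Set.decidableSingleton`, not classically.
lemma embMat_mul_apply {P : Type*} [DecidableEq P] {n : P → ℕ} {ι : Type*} (S : Set P)
    [Fintype {a : BIdx n // a.1 ∈ S}] (M : Matrix {a : BIdx n // a.1 ∈ S} ι ℝ)
    (a : BIdx n) (x : ι) : (embMat n S * M) a x = if h : a.1 ∈ S then M ⟨a, h⟩ x else 0 := by
  rw [mul_apply]
  split_ifs with ha
  · rw [Finset.sum_eq_single ⟨a, ha⟩]
    · simp [embMat]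
    · intro q _ hq
      rw [embMat, of_apply, if_neg (fun h => hq (Subtype.ext h.symm)), zero_mul]
    · simp
  · refine Finset.sum_eq_zero fun q _ => ?_
    rw [embMat, of_apply, if_neg (fun h : a = q => ha (h ▸ q.2)), zero_mul]

lemma embMat_mul_embMat_transpose {P : Type*} [DecidableEq P] {n : P → ℕ} (S : Set P)
    [Fintype {a : BIdx n // a.1 ∈ S}] :
    embMat n S * (embMat n S)ᵀ = projMat n S := by
  ext a b
  rw [embMat_mul_apply]
  split_ifs with ha <;> simp [embMat, projMat, ha, eq_comm]

lemma projMat_mul_embMat (S : Set P) :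
    projMat n S * embMat n S = embMat n S := by
  rw [← embMat_mul_embMat_transpose, Matrix.mul_assoc, embMat_transpose_mul_embMat,
    Matrix.mul_one]

lemma range_toEuclideanLin_embMat (S : Set P) :
    LinearMap.range (toEuclideanLin (embMat n S)) = coordE n S := by
  apply le_antisymm
  · rw [coordE, ← projMat_mul_embMat, toLpLin_mul_same]
    exact LinearMap.range_comp_le_range _ _
  · rw [coordE, ← embMat_mul_embMat_transpose, toLpLin_mul_same]
    exact LinearMap.range_comp_le_range _ _

lemma map_embMat_orthogonal (S : Set P)
    (W : Submodule ℝ (EuclideanSpace ℝ {a : BIdx n // a.1 ∈ S})) :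
    Wᗮ.map (toEuclideanLin (embMat n S)) =
      (W.map (toEuclideanLin (embMat n S)))ᗮ ⊓ coordE n S := by
  rw [map_toEuclideanLin_orthogonal (embMat_transpose_mul_embMat S), range_toEuclideanLin_embMat]

lemma mul_embMat_eq_embMat_mul_bcmp {m : P → ℕ} (G : Matrix (BIdx n) (BIdx m) ℝ) {Q S : Set P}
    (h : ∀ a b, b.1 ∈ S → a.1 ∉ Q → G a b = 0) :
    G * embMat m S = embMat n Q * bcmp G Q S := by
  ext a q
  rw [mul_embMat_apply, embMat_mul_apply]
  split_ifs with ha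
  · rfl
  · exact h a q q.2 ha

lemma pow_mul_embMat_eq_embMat_mul_bcmp {D : Set P}
    (A : Matrix (BIdx n) (BIdx n) ℝ)
    (h : ∀ a b, b.1 ∈ D → a.1 ∉ D → A a b = 0) (k : ℕ) :
    A ^ k * embMat n D = embMat n D * bcmp A D D ^ k := by
  induction k with
  | zero => rw [pow_zero, pow_zero, Matrix.one_mul, Matrix.mul_one]
  | succ k ih =>
    rw [pow_succ', pow_succ', Matrix.mul_assoc, ih, ← Matrix.mul_assoc,
      mul_embMat_eq_embMat_mul_bcmp A h, Matrix.mul_assoc]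

end Embedding

lemma mem_downSet_singleton {P : Type*} {le : P → P → Prop} {a i : P} :
    a ∈ downSet le {i} ↔ le a i :=
  ⟨fun ⟨_, hj, h⟩ => hj ▸ h, fun h => ⟨i, rfl, h⟩⟩

lemma Inc.transpose {P : Type*} {le : P → P → Prop} {n m : P → ℕ}
    {G : Matrix (BIdx n) (BIdx m) ℝ} (hG : Inc le G) : Inc (flip le) Gᵀ :=
  fun a b h => hG b a h

section Causality

variable {le : P → P → Prop} {n m : P → ℕ}

lemma range_toEuclideanLin_eq_iSup (M : Matrix (BIdx n) (BIdx m) ℝ) :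
    LinearMap.range (toEuclideanLin M) =
      ⨆ i, LinearMap.range (toEuclideanLin (M * embMat m {i})) := by
  refine le_antisymm ?_ (iSup_le fun i => ?_)
  · rintro _ ⟨v, rfl⟩
    have hM : toEuclideanLin M v =
        ∑ i, toEuclideanLin (M * embMat m {i}) (toEuclideanLin (embMat m {i})ᵀ v) := by
      simp_rw [← LinearMap.comp_apply, ← toLpLin_mul_same, ← LinearMap.sum_apply, ← map_sum,
        Matrix.mul_assoc, embMat_mul_embMat_transpose, ← Matrix.mul_sum, sum_projMat_singleton,
        Matrix.mul_one]
    rw [hM]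
    exact Submodule.sum_mem _ fun i _ =>
      Submodule.mem_iSup_of_mem i (LinearMap.mem_range_self _ _)
  · rw [toLpLin_mul_same]
    exact LinearMap.range_comp_le_range _ _

lemma RiE_eq_iSup (htrans : ∀ i j k, le i j → le j k → le i k)
    {A : Matrix (BIdx n) (BIdx n) ℝ} {B : Matrix (BIdx n) (BIdx m) ℝ}
    (hA : Inc le A) (hB : Inc le B) (i : P) :
    RiE le A B i = ⨆ k : ℕ, LinearMap.range (toEuclideanLin (A ^ k * B * embMat m {i})) := by
  have hBi : ∀ a b, b.1 ∈ ({i} : Set P) → a.1 ∉ downSet le {i} → B a b = 0 :=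
    fun a b hb ha => hB a b fun h => ha (mem_downSet_singleton.mpr (hb ▸ h))
  have hAi : ∀ a b, b.1 ∈ downSet le {i} → a.1 ∉ downSet le {i} → A a b = 0 :=
    fun a b hb ha => hA a b fun h =>
      ha (mem_downSet_singleton.mpr (htrans _ _ _ h (mem_downSet_singleton.mp hb)))
  rw [RiE, reachE_eq_iSup, Submodule.map_iSup]
  refine iSup_congr fun k => ?_
  rw [Matrix.mul_assoc, mul_embMat_eq_embMat_mul_bcmp B hBi, ← Matrix.mul_assoc,
    pow_mul_embMat_eq_embMat_mul_bcmp A hAi, Matrix.mul_assoc,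
    toLpLin_mul_same (A := embMat n _), LinearMap.range_comp]

lemma reachE_eq_iSup_RiE (htrans : ∀ i j k, le i j → le j k → le i k)
    {A : Matrix (BIdx n) (BIdx n) ℝ} {B : Matrix (BIdx n) (BIdx m) ℝ}
    (hA : Inc le A) (hB : Inc le B) :
    reachE A B = ⨆ i, RiE le A B i := by
  simp_rw [reachE_eq_iSup, range_toEuclideanLin_eq_iSup, RiE_eq_iSup htrans hA hB]
  exact iSup_comm

lemma RiE_le_coordE (A : Matrix (BIdx n) (BIdx n) ℝ) (B : Matrix (BIdx n) (BIdx m) ℝ) (i : P) :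
    RiE le A B i ≤ coordE n (downSet le {i}) := by
  rw [RiE, ← range_toEuclideanLin_embMat]
  exact LinearMap.map_le_range

lemma NiE_flip_transpose_eq (A : Matrix (BIdx n) (BIdx n) ℝ) (B : Matrix (BIdx n) (BIdx m) ℝ)
    (i : P) : NiE (flip le) Bᵀ Aᵀ i = (RiE le A B i)ᗮ ⊓ coordE n (downSet le {i}) := by
  change Submodule.map (toEuclideanLin (embMat n (downSet le {i})))
    (unobsE (bcmp B (downSet le {i}) {i})ᵀ (bcmp A (downSet le {i}) (downSet le {i}))ᵀ) = _
  rw [unobsE_transpose_eq_orthogonal, map_embMat_orthogonal]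
  rfl

end Causality

section Duality

variable {le : P → P → Prop} {n m : P → ℕ}

lemma orthogonal_iSup_coordE {W : P → Submodule ℝ (EuclideanSpace ℝ (BIdx n))}
    (hW : ∀ j, W j ≤ coordE n {j}) : (⨆ j, W j)ᗮ = ⨆ j, coordE n {j} ⊓ (W j)ᗮ :=
  Submodule.orthogonal_iSup_of_le (fun _ _ h => coordE_isOrtho (Set.disjoint_singleton.mpr h))
    sum_starProjection_coordE hW

lemma map_projMat_le_coordE (S : Set P) (V : Submodule ℝ (EuclideanSpace ℝ (BIdx n))) :
    V.map (toEuclideanLin (projMat n S)) ≤ coordE n S :=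
  LinearMap.map_le_range

lemma coordE_singleton_le_downSet {i j : P} (h : le j i) :
    coordE n {j} ≤ coordE n (downSet le {i}) :=
  coordE_mono (Set.singleton_subset_iff.mpr (mem_downSet_singleton.mpr h))

lemma coordE_le_orthogonal_RiE (A : Matrix (BIdx n) (BIdx n) ℝ) (B : Matrix (BIdx n) (BIdx m) ℝ)
    {i j : P} (h : ¬ le j i) : coordE n {j} ≤ (RiE le A B i)ᗮ :=
  (coordE_isOrtho (Set.disjoint_singleton_left.mpr (h ∘ mem_downSet_singleton.mp))).le.trans
    (Submodule.orthogonal_le (RiE_le_coordE A B i))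

lemma Ncirc_transpose_eq_orthogonal_Rcirc (A : Matrix (BIdx n) (BIdx n) ℝ)
    (B : Matrix (BIdx n) (BIdx m) ℝ) :
    Ncirc Bᵀ Aᵀ = (Rcirc A B)ᗮ := by
  rw [Ncirc, Rcirc, unobsE_transpose_eq_orthogonal, orthogonal_iSup_coordE fun j => inf_le_left]
  simp_rw [toEuclideanLin_projMat, Submodule.map_starProjection_orthogonal]

lemma Nbar_flip_transpose_eq_orthogonal_Rtil (hrefl : ∀ i, le i i)
    (htrans : ∀ i j k, le i j → le j k → le i k)
    {A : Matrix (BIdx n) (BIdx n) ℝ} {B : Matrix (BIdx n) (BIdx m) ℝ}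
    (hA : Inc le A) (hB : Inc le B) :
    Nbar (flip le) Bᵀ Aᵀ = (Rtil A B)ᗮ := by
  rw [Nbar, Rtil, orthogonal_iSup_coordE fun j => map_projMat_le_coordE _ _]
  refine iSup_congr fun j => ?_
  calc ⨅ i, ⨅ _ : le j i, NiE (flip le) Bᵀ Aᵀ i ⊓ coordE n {j}
      = ⨅ i, ⨅ _ : le j i, coordE n {j} ⊓ (RiE le A B i)ᗮ := by
        refine iInf_congr fun i => iInf_congr fun h => ?_
        rw [NiE_flip_transpose_eq, inf_assoc, inf_comm,
          inf_eq_right.mpr (coordE_singleton_le_downSet h)]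
    _ = coordE n {j} ⊓ ⨅ i, (RiE le A B i)ᗮ := by
        rw [← inf_biInf ⟨j, hrefl j⟩]
        refine le_antisymm (le_inf inf_le_left (le_iInf fun i => ?_))
          (inf_le_inf_left _ (iInf_mono fun i => le_iInf fun _ => le_rfl))
        by_cases h : le j i
        · exact inf_le_right.trans (iInf₂_le i h)
        · exact inf_le_left.trans (coordE_le_orthogonal_RiE A B h)
    _ = coordE n {j} ⊓ (Submodule.map (toEuclideanLin (projMat n {j})) (reachE A B))ᗮ := by
        rw [toEuclideanLin_projMat, Submodule.inf_orthogonal_map_starProjection,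
          reachE_eq_iSup_RiE htrans hA hB, Submodule.orthogonal_iSup]

lemma map_projMat_NiE_flip_transpose_eq (A : Matrix (BIdx n) (BIdx n) ℝ)
    (B : Matrix (BIdx n) (BIdx m) ℝ) {i j : P} (h : le j i) :
    (NiE (flip le) Bᵀ Aᵀ i).map (toEuclideanLin (projMat n {j})) =
      coordE n {j} ⊓ (coordE n {j} ⊓ RiE le A B i)ᗮ := by
  rw [NiE_flip_transpose_eq, toEuclideanLin_projMat, ← Submodule.map_starProjection_orthogonal]
  exact Submodule.map_starProjection_orthogonal_inf_of_le (coordE_singleton_le_downSet h)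
    (RiE_le_coordE A B i)

lemma Ntil_flip_transpose_eq_orthogonal_Rbar (hrefl : ∀ i, le i i)
    (A : Matrix (BIdx n) (BIdx n) ℝ) (B : Matrix (BIdx n) (BIdx m) ℝ) :
    Ntil (flip le) Bᵀ Aᵀ = (Rbar le A B)ᗮ := by
  rw [Ntil, Rbar, orthogonal_iSup_coordE fun j => iSup₂_le fun _ _ => inf_le_left]
  refine iSup_congr fun j => ?_
  simp_rw [Submodule.orthogonal_iSup]
  rw [inf_biInf ⟨j, hrefl j⟩]
  exact iInf_congr fun i => iInf_congr fun h => map_projMat_NiE_flip_transpose_eq A B h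

end Duality

theorem structured_duality_general (le : P → P → Prop)
    (hrefl : ∀ i, le i i) (htrans : ∀ i j k, le i j → le j k → le i k)
    (n m r : P → ℕ)
    (A : Matrix (BIdx n) (BIdx n) ℝ) (B : Matrix (BIdx n) (BIdx m) ℝ)
    (C : Matrix (BIdx r) (BIdx n) ℝ)
    (hA : Inc le A) (hB : Inc le B) (hC : Inc le C) :
    Rbar (flip le) Aᵀ Cᵀ = (Ntil le C A)ᗮ ∧
      Rcirc Aᵀ Cᵀ = (Ncirc C A)ᗮ ∧
      Rtil Aᵀ Cᵀ = (Nbar le C A)ᗮ ∧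
      Nbar (flip le) Bᵀ Aᵀ = (Rtil A B)ᗮ ∧
      Ncirc Bᵀ Aᵀ = (Rcirc A B)ᗮ ∧
      Ntil (flip le) Bᵀ Aᵀ = (Rbar le A B)ᗮ := by
  have htrans' : ∀ i j k, flip le i j → flip le j k → flip le i k :=
    fun i j k hij hjk => htrans k j i hjk hij
  have hNtil := Ntil_flip_transpose_eq_orthogonal_Rbar (le := flip le) hrefl Aᵀ Cᵀ
  have hNcirc := Ncirc_transpose_eq_orthogonal_Rcirc Aᵀ Cᵀ
  have hNbar := Nbar_flip_transpose_eq_orthogonal_Rtil (le := flip le) hrefl htrans'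
    hA.transpose hC.transpose
  simp only [transpose_transpose, flip_flip] at hNtil hNcirc hNbar
  refine ⟨?_, ?_, ?_, Nbar_flip_transpose_eq_orthogonal_Rtil hrefl htrans hA hB,
    Ncirc_transpose_eq_orthogonal_Rcirc A B, Ntil_flip_transpose_eq_orthogonal_Rbar hrefl A B⟩
  · rw [hNtil, Submodule.orthogonal_orthogonal]
  · rw [hNcirc, Submodule.orthogonal_orthogonal]
  · rw [hNbar, Submodule.orthogonal_orthogonal]

/-- Duality between the structured controllability and observability subspaces of a
poset-causal system `Σ_P ∼ (A,B,C,D)` and its dual system `Σ_{P_d} ∼ (Aᵀ,Cᵀ,Bᵀ,Dᵀ)` over the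
dual poset (the order `flip le`): `(R̄)^d = Ñᗮ`, `(R°)^d = (N°)ᗮ`, `(R̃)^d = N̄ᗮ`,
`(N̄)^d = R̃ᗮ`, `(N°)^d = (R°)ᗮ` and `(Ñ)^d = R̄ᗮ`. -/
theorem structured_duality (le : P → P → Prop)
    (hrefl : ∀ i, le i i) (htrans : ∀ i j k, le i j → le j k → le i k)
    (hanti : ∀ i j, le i j → le j i → i = j)
    (n m r : P → ℕ)
    (A : Matrix (BIdx n) (BIdx n) ℝ) (B : Matrix (BIdx n) (BIdx m) ℝ)
    (C : Matrix (BIdx r) (BIdx n) ℝ)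
    (hA : Inc le A) (hB : Inc le B) (hC : Inc le C) :
    Rbar (flip le) Aᵀ Cᵀ = (Ntil le C A)ᗮ ∧
      Rcirc Aᵀ Cᵀ = (Ncirc C A)ᗮ ∧
      Rtil Aᵀ Cᵀ = (Nbar le C A)ᗮ ∧
      Nbar (flip le) Bᵀ Aᵀ = (Rtil A B)ᗮ ∧
      Ncirc Bᵀ Aᵀ = (Rcirc A B)ᗮ ∧
      Ntil (flip le) Bᵀ Aᵀ = (Rbar le A B)ᗮ :=
  structured_duality_general le hrefl htrans n m r A B C hA hB hC
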